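/- The marginal distribution of the extended Markov random field p((x,P(x)),(z,P(z))) ∝ ∏_{i∈V} ψ_i(x_i,P_i) · ∏_{a∈C} ψ_a(z_a,P_a)·φ_a(x_{V(a)}, z_a, P_{V(a)}), obtained by summing over the parent-set variables P, equals the weighted distribution p(z,x) ∝ w_sou^{n_*(z)} · w_info^{n_*(x)} · exp(-2γ·d_H(y,z)) over generalized codewords. Equivalently, for each generalized codeword (z,x) there is exactly one valid assignment of the variables P consistent with it, and its weight equals the stated product. -/

import Mathlib

/-- Check `a` is forcing: none of its neighbors (source bit `z a` and info bits
`x i`, `i ∈ Vnb a`) is `*` (= `none`), and the parity check is satisfied. -/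
def Forcing {n m : ℕ} (Vnb : Fin n → Finset (Fin m))
    (z : Fin n → Option (ZMod 2)) (x : Fin m → Option (ZMod 2)) (a : Fin n) : Prop :=
  (z a).isSome = true ∧ (∀ i ∈ Vnb a, (x i).isSome = true) ∧
    z a = some (∑ i ∈ Vnb a, (x i).getD 0)

/-- Check `a` is free: its source bit is `*` and at least one info-bit neighbor is `*`. -/
def Free {n m : ℕ} (Vnb : Fin n → Finset (Fin m))
    (z : Fin n → Option (ZMod 2)) (x : Fin m → Option (ZMod 2)) (a : Fin n) : Prop :=
  z a = none ∧ ∃ i ∈ Vnb a, x i = none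

/-- Generalized codeword: every check is forcing or free, and every 0/1-valued
information bit has at least two forcing check neighbors. -/
def GenCodeword {n m : ℕ} (Vnb : Fin n → Finset (Fin m))
    (z : Fin n → Option (ZMod 2)) (x : Fin m → Option (ZMod 2)) : Prop :=
  (∀ a, Forcing Vnb z x a ∨ Free Vnb z x a) ∧
  ∀ i, (x i).isSome = true →
    2 ≤ {a : Fin n | Forcing Vnb z x a ∧ i ∈ Vnb a}.ncard

open Classical in
/-- Variable compatibility for information bit `i`: value `1` if `x i ∈ {0,1}` and
`P i` consists of at least two of `i`'s check neighbors; `w_info` if `x i = *` and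
`P i = ∅`; and `0` otherwise. -/
noncomputable def psiInfo {n m : ℕ} (Vnb : Fin n → Finset (Fin m)) (winfo : ℝ)
    (x : Fin m → Option (ZMod 2)) (Px : Fin m → Finset (Fin n)) (i : Fin m) : ℝ :=
  if (x i).isSome = true ∧ Px i ⊆ Finset.univ.filter (fun a => i ∈ Vnb a) ∧
      2 ≤ (Px i).card then 1
  else if x i = none ∧ Px i = ∅ then winfo
  else 0

open Classical in
/-- Variable compatibility for source bit `a`: value `λ¹_a = exp γ` (if `y a = 1`)
resp. `λ⁰_a = exp (-γ)` when `z a = y a` resp. `z a ≠ y a` with `P a = {a}`;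
`w_sou` if `z a = *` and `P a = ∅`; and `0` otherwise. -/
noncomputable def psiSou {n : ℕ} (wsou γ : ℝ) (y : Fin n → ZMod 2)
    (z : Fin n → Option (ZMod 2)) (Pz : Fin n → Finset (Fin n)) (a : Fin n) : ℝ :=
  match z a with
  | some v => if Pz a = {a} then (if v = y a then Real.exp γ else Real.exp (-γ)) else 0
  | none => if Pz a = ∅ then wsou else 0

open Classical in
/-- Check compatibility for check `a`: value `1` iff the local configuration
`(z_a, x_{V(a)})` is valid (forcing or free) and, for every `i ∈ V(a)`,
`a ∈ P_i` iff check `a` is forcing; and `0` otherwise. -/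
noncomputable def phiChk {n m : ℕ} (Vnb : Fin n → Finset (Fin m))
    (z : Fin n → Option (ZMod 2)) (x : Fin m → Option (ZMod 2))
    (Px : Fin m → Finset (Fin n)) (a : Fin n) : ℝ :=
  if (Forcing Vnb z x a ∨ Free Vnb z x a) ∧
      (∀ i ∈ Vnb a, (a ∈ Px i ↔ Forcing Vnb z x a)) then 1 else 0

/-- Total weight of the extended Markov random field~\eqref{EqnExtendedMRF}. -/
noncomputable def mrfWeight {n m : ℕ} (Vnb : Fin n → Finset (Fin m))
    (wsou winfo γ : ℝ) (y : Fin n → ZMod 2)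
    (z : Fin n → Option (ZMod 2)) (x : Fin m → Option (ZMod 2))
    (P : (Fin m → Finset (Fin n)) × (Fin n → Finset (Fin n))) : ℝ :=
  (∏ i, psiInfo Vnb winfo x P.1 i) *
    (∏ a, psiSou wsou γ y z P.2 a) * (∏ a, phiChk Vnb z x P.1 a)

/-- Number of `*`-symbols in a configuration vector. -/
def nStar {k : ℕ} (v : Fin k → Option (ZMod 2)) : ℕ :=
  (Finset.univ.filter (fun a => v a = none)).card

/-- Hamming distortion between the source sequence `y` and the (partially starred)
source bits `z`, a `*` counting as distortion `1/2`. -/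
noncomputable def dH {n : ℕ} (y : Fin n → ZMod 2) (z : Fin n → Option (ZMod 2)) : ℝ :=
  ∑ a, (if z a = some (y a) then 0 else if z a = none then 1 / 2 else 1 : ℝ)

/-
A generalized codeword `(z, x)` pins down the parent sets: the check compatibilities force
`P_i` to be exactly the set of forcing checks next to `i`, and the source compatibilities force
`P_a = {a}` or `∅` according as `z_a` is a bit or `*`. So the sum over `P` has a single nonzero
term. In it every `φ_a` is `1`, every starred bit contributes its star weight, and each
`ψ_a` equals `e^γ · e^{-2γ d_a}` (times `w_sou` for a star) with `d_a ∈ {0, 1/2, 1}` the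
per-symbol distortion, which gives the stated weight with `c = e^{nγ}`.
-/

open Finset

section ParentSets

open Classical

variable {n m : ℕ} (Vnb : Fin n → Finset (Fin m))
  (z : Fin n → Option (ZMod 2)) (x : Fin m → Option (ZMod 2))

noncomputable def forcingParents (i : Fin m) : Finset (Fin n) :=
  univ.filter fun a => Forcing Vnb z x a ∧ i ∈ Vnb a

def sourceParents (a : Fin n) : Finset (Fin n) :=
  if (z a).isSome then {a} else ∅

noncomputable def canonicalParents : (Fin m → Finset (Fin n)) × (Fin n → Finset (Fin n)) :=
  (forcingParents Vnb z x, sourceParents z)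

variable {Vnb z x}

theorem forcingParents_eq_empty {i : Fin m} (hx : x i = none) :
    forcingParents Vnb z x i = ∅ :=
  filter_eq_empty_iff.mpr fun _ _ ⟨hf, hi⟩ => by simpa [hx] using hf.2.1 i hi

theorem phiChk_forcingParents (hvalid : ∀ a, Forcing Vnb z x a ∨ Free Vnb z x a) (a : Fin n) :
    phiChk Vnb z x (forcingParents Vnb z x) a = 1 :=
  if_pos ⟨hvalid a, fun i hi => by simp [forcingParents, hi]⟩

theorem psiInfo_forcingParents (hcw : GenCodeword Vnb z x) (winfo : ℝ) (i : Fin m) :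
    psiInfo Vnb winfo x (forcingParents Vnb z x) i = if x i = none then winfo else 1 := by
  unfold psiInfo
  cases hxi : x i with
  | none => simp [forcingParents_eq_empty hxi]
  | some v =>
    have hsub : forcingParents Vnb z x i ⊆ univ.filter fun a => i ∈ Vnb a :=
      fun _ ha => by simp_all [forcingParents]
    have hcard : 2 ≤ (forcingParents Vnb z x i).card := by
      have hset : {a : Fin n | Forcing Vnb z x a ∧ i ∈ Vnb a} = ↑(forcingParents Vnb z x i) := by
        ext; simp [forcingParents]
      simpa [hset, Set.ncard_coe_finset] using hcw.2 i (by simp [hxi])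
    simp [hsub, hcard]

theorem mem_iff_forcing_of_phiChk_ne_zero {Px : Fin m → Finset (Fin n)} {a : Fin n}
    (h : phiChk Vnb z x Px a ≠ 0) {i : Fin m} (hi : i ∈ Vnb a) :
    a ∈ Px i ↔ Forcing Vnb z x a := by
  unfold phiChk at h
  split_ifs at h with hc
  · exact hc.2 i hi
  · exact absurd rfl h

theorem eq_forcingParents_of_ne_zero {winfo : ℝ} {Px : Fin m → Finset (Fin n)}
    (hpsi : ∀ i, psiInfo Vnb winfo x Px i ≠ 0) (hphi : ∀ a, phiChk Vnb z x Px a ≠ 0) :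
    Px = forcingParents Vnb z x := by
  funext i
  have hi := hpsi i
  unfold psiInfo at hi
  split_ifs at hi with hbit hstar
  · ext a
    have hnb : a ∈ Px i → i ∈ Vnb a := fun ha => by simpa using hbit.2.1 ha
    simp only [forcingParents, mem_filter, mem_univ, true_and]
    exact ⟨fun ha => ⟨(mem_iff_forcing_of_phiChk_ne_zero (hphi a) (hnb ha)).mp ha, hnb ha⟩,
      fun ⟨hf, hia⟩ => (mem_iff_forcing_of_phiChk_ne_zero (hphi a) hia).mpr hf⟩
  · rw [hstar.2, forcingParents_eq_empty hstar.1]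
  · exact absurd rfl hi

theorem eq_sourceParents_of_ne_zero {wsou γ : ℝ} {y : Fin n → ZMod 2}
    {Pz : Fin n → Finset (Fin n)} (hpsi : ∀ a, psiSou wsou γ y z Pz a ≠ 0) :
    Pz = sourceParents z := by
  funext a
  have ha := hpsi a
  unfold psiSou at ha
  unfold sourceParents
  cases hza : z a <;> simp only [hza] at ha <;> by_contra hne <;> exact ha (if_neg hne)

theorem eq_canonicalParents_of_mrfWeight_ne_zero {wsou winfo γ : ℝ} {y : Fin n → ZMod 2}
    {P : (Fin m → Finset (Fin n)) × (Fin n → Finset (Fin n))}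
    (h : mrfWeight Vnb wsou winfo γ y z x P ≠ 0) : P = canonicalParents Vnb z x := by
  unfold mrfWeight at h
  obtain ⟨hinfo, hsou⟩ := mul_ne_zero_iff.mp (left_ne_zero_of_mul h)
  have hchk := right_ne_zero_of_mul h
  simp only [prod_ne_zero_iff, mem_univ, true_implies] at hinfo hsou hchk
  exact Prod.ext (eq_forcingParents_of_ne_zero hinfo hchk) (eq_sourceParents_of_ne_zero hsou)

end ParentSets

noncomputable def symbolDistortion (y : ZMod 2) (z : Option (ZMod 2)) : ℝ :=
  if z = some y then 0 else if z = none then 1 / 2 else 1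

theorem dH_eq_sum_symbolDistortion {n : ℕ} (y : Fin n → ZMod 2) (z : Fin n → Option (ZMod 2)) :
    dH y z = ∑ a, symbolDistortion (y a) (z a) :=
  rfl

theorem prod_ite_none_eq_pow_nStar {k : ℕ} (v : Fin k → Option (ZMod 2)) (w : ℝ) :
    ∏ a, (if v a = none then w else 1) = w ^ nStar v := by
  rw [prod_ite, prod_const, prod_const_one, mul_one, nStar]

theorem psiSou_sourceParents {n : ℕ} (wsou γ : ℝ) (y : Fin n → ZMod 2)
    (z : Fin n → Option (ZMod 2)) (a : Fin n) :
    psiSou wsou γ y z (sourceParents z) a =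
      Real.exp γ * (if z a = none then wsou else 1) *
        Real.exp (-2 * γ * symbolDistortion (y a) (z a)) := by
  unfold psiSou sourceParents symbolDistortion
  cases z a with
  | none =>
    simp only [Option.isSome_none, reduceCtorEq, if_false, if_true]
    rw [mul_comm (Real.exp γ), mul_assoc, ← Real.exp_add]
    ring_nf
    rw [Real.exp_zero, mul_one]
  | some v =>
    by_cases hv : v = y a
    · simp [hv]
    · simp only [Option.isSome_some, if_true, hv, if_false, Option.some.injEq, reduceCtorEq,
        mul_one, ← Real.exp_add]
      ring_nf

theorem mrfWeight_canonicalParents {n m : ℕ} {Vnb : Fin n → Finset (Fin m)}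
    {z : Fin n → Option (ZMod 2)} {x : Fin m → Option (ZMod 2)} (hcw : GenCodeword Vnb z x)
    (wsou winfo γ : ℝ) (y : Fin n → ZMod 2) :
    mrfWeight Vnb wsou winfo γ y z x (canonicalParents Vnb z x) =
      Real.exp (n * γ) * wsou ^ nStar z * winfo ^ nStar x * Real.exp (-2 * γ * dH y z) := by
  simp only [mrfWeight, canonicalParents, phiChk_forcingParents hcw.1,
    psiInfo_forcingParents hcw, psiSou_sourceParents, prod_const_one, mul_one,
    prod_mul_distrib, prod_ite_none_eq_pow_nStar, prod_const, card_univ, Fintype.card_fin,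
    ← Real.exp_nat_mul, ← Real.exp_sum, ← mul_sum, dH_eq_sum_symbolDistortion]
  ring

/-- for positive star weights, the marginal over `(z, x)` of the
extended Markov random field agrees (up to a positive constant) with the weighted
distribution `w_sou^{n_*(z)} · w_info^{n_*(x)} · exp(-2 γ d_H(y,z))` on generalized
codewords; equivalently, each generalized codeword supports exactly one valid
assignment of the parent-set variables `P`, whose weight is the stated product. -/
theorem extended_mrf_marginal {n m : ℕ} (Vnb : Fin n → Finset (Fin m))
    (wsou winfo γ : ℝ) (hwsou : 0 < wsou) (hwinfo : 0 < winfo)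
    (y : Fin n → ZMod 2) :
    ∃ c : ℝ, 0 < c ∧
      ∀ (z : Fin n → Option (ZMod 2)) (x : Fin m → Option (ZMod 2)),
        GenCodeword Vnb z x →
          (∃! P : (Fin m → Finset (Fin n)) × (Fin n → Finset (Fin n)),
            mrfWeight Vnb wsou winfo γ y z x P ≠ 0) ∧
          (∑ P : (Fin m → Finset (Fin n)) × (Fin n → Finset (Fin n)),
              mrfWeight Vnb wsou winfo γ y z x P) =
            c * wsou ^ nStar z * winfo ^ nStar x * Real.exp (-2 * γ * dH y z) := by
  refine ⟨Real.exp (n * γ), Real.exp_pos _, fun z x hcw => ?_⟩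
  have hweight := mrfWeight_canonicalParents hcw wsou winfo γ y
  have hunique : ∀ P, mrfWeight Vnb wsou winfo γ y z x P ≠ 0 → P = canonicalParents Vnb z x :=
    fun _ => eq_canonicalParents_of_mrfWeight_ne_zero
  have hne_zero : mrfWeight Vnb wsou winfo γ y z x (canonicalParents Vnb z x) ≠ 0 := by
    rw [hweight]
    positivity
  refine ⟨⟨canonicalParents Vnb z x, hne_zero, hunique⟩, ?_⟩
  rw [Fintype.sum_eq_single _ fun P hP => not_imp_comm.mp (hunique P) hP, hweight]
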